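/- For every bounded linear operator A on a complex Hilbert space, w²(A) ≥ (1/4)‖A*A + AA*‖ + (1/4)c²(Re(A) + Im(A)) + (1/4)c²(Re(A) − Im(A)) + (1/4)| ‖Re(A) + Im(A)‖² − ‖Re(A) − Im(A)‖² + c²(Re(A) − Im(A)) − c²(Re(A) + Im(A)) |. -/

import Mathlib

/-!
Put `B = Re A + Im A` and `C = Re A - Im A`. Both are self-adjoint, `B² + C² = A*A + AA*`, and
`|⟨Bx, x⟩|² + |⟨Cx, x⟩|² = 2 |⟨Ax, x⟩|²`. Since the norm of a self-adjoint operator equals its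
numerical radius, this gives `‖B‖² + c²(C) ≤ 2 w²(A)` and `‖C‖² + c²(B) ≤ 2 w²(A)`. As
`‖A*A + AA*‖ ≤ ‖B‖² + ‖C‖²`, the left-hand side is at most half the larger of these two sums.
-/

open scoped InnerProductSpace
open ContinuousLinearMap

/-- The numerical radius of a bounded linear operator. -/
noncomputable def numRadius {H : Type*} [NormedAddCommGroup H] [InnerProductSpace ℂ H]
    (A : H →L[ℂ] H) : ℝ :=
  sSup {r : ℝ | ∃ x : H, ‖x‖ = 1 ∧ r = ‖⟪A x, x⟫_ℂ‖}

/-- The Crawford number of a bounded linear operator. -/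
noncomputable def crawford {H : Type*} [NormedAddCommGroup H] [InnerProductSpace ℂ H]
    (A : H →L[ℂ] H) : ℝ :=
  sInf {r : ℝ | ∃ x : H, ‖x‖ = 1 ∧ r = ‖⟪A x, x⟫_ℂ‖}

/-- The real part of a bounded linear operator. -/
noncomputable def reP {H : Type*} [NormedAddCommGroup H] [InnerProductSpace ℂ H]
    [CompleteSpace H] (A : H →L[ℂ] H) : H →L[ℂ] H :=
  ((2 : ℂ)⁻¹) • (A + adjoint A)

/-- The imaginary part of a bounded linear operator. -/
noncomputable def imP {H : Type*} [NormedAddCommGroup H] [InnerProductSpace ℂ H]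
    [CompleteSpace H] (A : H →L[ℂ] H) : H →L[ℂ] H :=
  ((2 * Complex.I)⁻¹) • (A - adjoint A)

section NumericalRadius
variable {H : Type*} [NormedAddCommGroup H] [InnerProductSpace ℂ H]

lemma norm_inner_self_le_opNorm (T : H →L[ℂ] H) {x : H} (hx : ‖x‖ = 1) :
    ‖⟪T x, x⟫_ℂ‖ ≤ ‖T‖ := by
  simpa [hx] using (norm_inner_le_norm (T x) x).trans
    (mul_le_mul_of_nonneg_right (T.le_opNorm x) (norm_nonneg x))

lemma norm_inner_self_le_numRadius (T : H →L[ℂ] H) {x : H} (hx : ‖x‖ = 1) :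
    ‖⟪T x, x⟫_ℂ‖ ≤ numRadius T :=
  le_csSup ⟨‖T‖, by rintro _ ⟨y, hy, rfl⟩; exact norm_inner_self_le_opNorm T hy⟩ ⟨x, hx, rfl⟩

lemma numRadius_nonneg (T : H →L[ℂ] H) : 0 ≤ numRadius T :=
  Real.sSup_nonneg (by rintro _ ⟨x, -, rfl⟩; exact norm_nonneg _)

lemma numRadius_le_opNorm (T : H →L[ℂ] H) : numRadius T ≤ ‖T‖ :=
  Real.sSup_le (by rintro _ ⟨x, hx, rfl⟩; exact norm_inner_self_le_opNorm T hx) (norm_nonneg T)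

lemma numRadius_sq_le [Nontrivial H] {T : H →L[ℂ] H} {t : ℝ}
    (h : ∀ x : H, ‖x‖ = 1 → ‖⟪T x, x⟫_ℂ‖ ^ 2 ≤ t) : numRadius T ^ 2 ≤ t := by
  obtain ⟨x₀, hx₀⟩ := exists_norm_eq H zero_le_one
  have ht : 0 ≤ t := (sq_nonneg _).trans (h x₀ hx₀)
  refine (Real.le_sqrt (numRadius_nonneg T) ht).1 (Real.sSup_le ?_ (Real.sqrt_nonneg t))
  rintro _ ⟨x, hx, rfl⟩
  exact Real.le_sqrt_of_sq_le (h x hx)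

lemma crawford_nonneg (T : H →L[ℂ] H) : 0 ≤ crawford T :=
  Real.sInf_nonneg (by rintro _ ⟨x, -, rfl⟩; exact norm_nonneg _)

lemma crawford_le_norm_inner_self (T : H →L[ℂ] H) {x : H} (hx : ‖x‖ = 1) :
    crawford T ≤ ‖⟪T x, x⟫_ℂ‖ :=
  csInf_le ⟨0, by rintro _ ⟨y, -, rfl⟩; exact norm_nonneg _⟩ ⟨x, hx, rfl⟩

lemma IsSelfAdjoint.norm_eq_numRadius [CompleteSpace H] {T : H →L[ℂ] H}
    (hT : IsSelfAdjoint T) : ‖T‖ = numRadius T := by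
  refine le_antisymm ?_ (numRadius_le_opNorm T)
  rw [T.norm_eq_iSup_rayleighQuotient hT.isSymmetric]
  refine ciSup_le fun x ↦ ?_
  rcases eq_or_ne x 0 with rfl | hx
  · simpa using numRadius_nonneg T
  have hu : ‖(‖x‖⁻¹ : ℂ) • x‖ = 1 := norm_smul_inv_norm hx
  rw [← T.rayleigh_smul x (c := (‖x‖⁻¹ : ℂ)) (by simpa using hx)]
  simp only [rayleighQuotient, reApplyInnerSelf_apply, hu, one_pow, div_one]
  exact (Complex.abs_re_le_norm _).trans (norm_inner_self_le_numRadius T hu)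

lemma IsSelfAdjoint.norm_sq_add_crawford_sq_le [CompleteSpace H] [Nontrivial H]
    {B C : H →L[ℂ] H} (hB : IsSelfAdjoint B) {w : ℝ}
    (h : ∀ x : H, ‖x‖ = 1 → ‖⟪B x, x⟫_ℂ‖ ^ 2 + ‖⟪C x, x⟫_ℂ‖ ^ 2 ≤ w) :
    ‖B‖ ^ 2 + crawford C ^ 2 ≤ w := by
  suffices numRadius B ^ 2 ≤ w - crawford C ^ 2 by rw [hB.norm_eq_numRadius]; linarith
  refine numRadius_sq_le fun x hx ↦ ?_
  have := pow_le_pow_left₀ (crawford_nonneg C) (crawford_le_norm_inner_self C hx) 2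
  linarith [h x hx]

end NumericalRadius

section CartesianDecomposition
variable {H : Type*} [NormedAddCommGroup H] [InnerProductSpace ℂ H] [CompleteSpace H]

lemma isSelfAdjoint_reP (A : H →L[ℂ] H) : IsSelfAdjoint (reP A) := by
  simp [IsSelfAdjoint, reP, star_eq_adjoint, add_comm]

lemma isSelfAdjoint_imP (A : H →L[ℂ] H) : IsSelfAdjoint (imP A) := by
  simp only [IsSelfAdjoint, imP, star_smul, star_sub, star_eq_adjoint, adjoint_adjoint]
  rw [← neg_sub, smul_neg, ← neg_smul]
  congr 1
  simp

lemma inner_reP_apply_self (A : H →L[ℂ] H) (x : H) :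
    ⟪reP A x, x⟫_ℂ = (⟪A x, x⟫_ℂ).re := by
  simp only [reP, smul_apply, add_apply, inner_smul_left, inner_add_left, adjoint_inner_left]
  rw [← inner_conj_symm x, Complex.add_conj, map_inv₀, map_ofNat]
  field_simp
  push_cast
  ring

-- The sign comes from `inner` being conjugate-linear in its first argument.
lemma inner_imP_apply_self (A : H →L[ℂ] H) (x : H) :
    ⟪imP A x, x⟫_ℂ = -(⟪A x, x⟫_ℂ).im := by
  simp only [imP, smul_apply, sub_apply, inner_smul_left, inner_sub_left, adjoint_inner_left]
  rw [← inner_conj_symm x, Complex.sub_conj, map_inv₀, map_mul, map_ofNat, Complex.conj_I]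
  field_simp
  push_cast
  ring

lemma norm_inner_reP_add_imP_sq_add_norm_inner_reP_sub_imP_sq (A : H →L[ℂ] H) (x : H) :
    ‖⟪(reP A + imP A) x, x⟫_ℂ‖ ^ 2 + ‖⟪(reP A - imP A) x, x⟫_ℂ‖ ^ 2 =
      2 * ‖⟪A x, x⟫_ℂ‖ ^ 2 := by
  simp only [add_apply, sub_apply, inner_add_left, inner_sub_left, inner_reP_apply_self,
    inner_imP_apply_self, Complex.sq_norm, Complex.normSq_apply, Complex.add_re,
    Complex.sub_re, Complex.add_im, Complex.sub_im, Complex.neg_re, Complex.neg_im,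
    Complex.ofReal_re, Complex.ofReal_im]
  ring

lemma reP_add_imP_sq_add_reP_sub_imP_sq (A : H →L[ℂ] H) :
    (reP A + imP A) ^ 2 + (reP A - imP A) ^ 2 = adjoint A * A + A * adjoint A := by
  have hI : ((2 : ℂ) * Complex.I)⁻¹ * (2 * Complex.I)⁻¹ = -(2⁻¹ * 2⁻¹) := by
    field_simp
    simp
  simp only [reP, imP, sq, add_mul, mul_add, sub_mul, mul_sub, smul_mul_smul_comm, hI]
  module

lemma norm_adjoint_mul_self_add_mul_adjoint_le (A : H →L[ℂ] H) :
    ‖adjoint A * A + A * adjoint A‖ ≤ ‖reP A + imP A‖ ^ 2 + ‖reP A - imP A‖ ^ 2 := by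
  have norm_sq {B : H →L[ℂ] H} (hB : IsSelfAdjoint B) : ‖B ^ 2‖ = ‖B‖ ^ 2 := by
    simpa using hB.norm_pow_two_pow 1
  rw [← reP_add_imP_sq_add_reP_sub_imP_sq,
    ← norm_sq ((isSelfAdjoint_reP A).add (isSelfAdjoint_imP A)),
    ← norm_sq ((isSelfAdjoint_reP A).sub (isSelfAdjoint_imP A))]
  exact norm_add_le _ _

end CartesianDecomposition

theorem stmt4 {H : Type*} [NormedAddCommGroup H] [InnerProductSpace ℂ H]
    [CompleteSpace H] [Nontrivial H] (A : H →L[ℂ] H) :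
    (1/4 : ℝ) * ‖adjoint A * A + A * adjoint A‖ +
      (1/4 : ℝ) * crawford (reP A + imP A) ^ 2 +
      (1/4 : ℝ) * crawford (reP A - imP A) ^ 2 +
      (1/4 : ℝ) * |‖reP A + imP A‖ ^ 2 - ‖reP A - imP A‖ ^ 2 +
        crawford (reP A - imP A) ^ 2 - crawford (reP A + imP A) ^ 2| ≤
      numRadius A ^ 2 := by
  have hsum (x : H) (hx : ‖x‖ = 1) :
      ‖⟪(reP A + imP A) x, x⟫_ℂ‖ ^ 2 + ‖⟪(reP A - imP A) x, x⟫_ℂ‖ ^ 2 ≤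
        2 * numRadius A ^ 2 := by
    rw [norm_inner_reP_add_imP_sq_add_norm_inner_reP_sub_imP_sq]
    gcongr
    exact norm_inner_self_le_numRadius A hx
  have hB := ((isSelfAdjoint_reP A).add (isSelfAdjoint_imP A)).norm_sq_add_crawford_sq_le hsum
  have hC := ((isSelfAdjoint_reP A).sub (isSelfAdjoint_imP A)).norm_sq_add_crawford_sq_le
    fun x hx ↦ (add_comm _ _).trans_le (hsum x hx)
  have hnorm := norm_adjoint_mul_self_add_mul_adjoint_le A
  rcases abs_cases (‖reP A + imP A‖ ^ 2 - ‖reP A - imP A‖ ^ 2 +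
      crawford (reP A - imP A) ^ 2 - crawford (reP A + imP A) ^ 2) with ⟨h, -⟩ | ⟨h, -⟩ <;>
    linarith
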